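/- arXiv:2603.16850 — 3 statements merged into one kernel-verified Lean document; each statement's English description precedes it below -/
import Mathlib

section
/- Consider the fixed-point problem of finding states s_1^*, ..., s_T^* in R^D satisfying s_t^* = f_t(s_{t-1}^*) for given functions f_t : R^D → R^D and a fixed initial condition s_0. Consider any iterative scheme where, given arbitrary matrices Ã_1, ..., Ã_T in R^{D×D} (which may change each iteration), the next iterate is defined by s_t^{(i+1)} = f_t(s_{t-1}^{(i)}) + Ã_t (s_{t-1}^{(i+1)} - s_{t-1}^{(i)}) for t = 1, ..., T (with s_0^{(i)} = s_0 for all i). Then for any initial guess s^{(0)}, the iterates converge exactly: for every i ≥ 0 and every t ≤ i, s_t^{(i)} = s_t^*. In particular the scheme converges to the true trajectory in at most T iterations. -/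
/-- **Global convergence of arbitrary quasi-Newton (quasi-DEER) iterations.**
For the fixed-point problem `s_t = f_t (s_{t-1})` with known initial condition `s0`,
any iterative scheme of the form
`s_t^{(i+1)} = f_t(s_{t-1}^{(i)}) + Ã_t^{(i)} (s_{t-1}^{(i+1)} - s_{t-1}^{(i)})`
(with completely arbitrary matrices `Ã_t^{(i)}`) converges exactly:
after `i` iterations the first `i` entries of the trajectory are correct,
hence the scheme converges to the true trajectory in at most `T` iterations. -/
theorem quasi_newton_global_convergence
    (D T : ℕ)
    (f : ℕ → (Fin D → ℝ) → (Fin D → ℝ))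
    (s0 : Fin D → ℝ)
    (sstar : ℕ → (Fin D → ℝ))
    (hstar0 : sstar 0 = s0)
    (hstar : ∀ t, 1 ≤ t → t ≤ T → sstar t = f t (sstar (t - 1)))
    (Atil : ℕ → ℕ → Matrix (Fin D) (Fin D) ℝ)  -- Ã_t at iteration i: arbitrary matrices
    (s : ℕ → ℕ → (Fin D → ℝ))                  -- s i t : iterate i at time t
    (hs0 : ∀ i, s i 0 = s0)
    (hupd : ∀ i t, 1 ≤ t → t ≤ T →
      s (i + 1) t
        = f t (s i (t - 1)) + (Atil i t).mulVec (s (i + 1) (t - 1) - s i (t - 1))) :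
    ∀ i t, t ≤ i → t ≤ T → s i t = sstar t := by
  intro i
  induction i with
  | zero =>
    intro t ht _
    interval_cases t
    rw [hs0, hstar0]
  | succ i ih =>
    intro t ht hT
    rcases Nat.eq_zero_or_pos t with h0 | h1
    · subst h0; rw [hs0, hstar0]
    · have ht1 : t - 1 ≤ i := by omega
      have hT1 : t - 1 ≤ T := by omega
      have h1' : t - 1 ≤ i + 1 := by omega
      have e1 : s i (t - 1) = sstar (t - 1) := ih (t - 1) ht1 hT1
      have e2 : s (i + 1) (t - 1) = sstar (t - 1) := by
        rcases Nat.eq_zero_or_pos (t - 1) with h | h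
        · rw [h, hs0, hstar0]
        · -- need s (i+1) (t-1) correct; prove general claim by strong induction
          -- use the fact that entries ≤ i stay correct at iteration i+1
          have key : ∀ u, u ≤ i → u ≤ T → s (i + 1) u = sstar u := by
            intro u
            induction u with
            | zero => intro _ _; rw [hs0, hstar0]
            | succ u ihu =>
              intro hu huT
              have hu1 := hupd i (u + 1) (by omega) huT
              simp only [Nat.add_sub_cancel] at hu1
              rw [hu1, ih u (by omega) (by omega),
                ihu (by omega) (by omega), sub_self, Matrix.mulVec_zero, add_zero]
              have := hstar (u + 1) (by omega) huT
              simp only [Nat.add_sub_cancel] at this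
              exact this.symm
          exact key (t - 1) ht1 hT1
      rw [hupd i t h1 hT, e1, e2, sub_self, Matrix.mulVec_zero, add_zero,
        ← hstar t h1 hT]
end

section
/- Let J = I - N ∈ R^{TD×TD} where N is the block subdiagonal matrix built from A_2,...,A_T. Assume the regularity condition: for all valid t and k ≥ 0, b e^{λk} ≤ ‖A_{t+k-1} ⋯ A_t‖₂ ≤ a e^{λk} with a ≥ 1, b ≤ 1 (products of length k starting at any index t). Then the smallest singular value σ_min(J) = 1/‖J^{-1}‖₂ satisfies (for λ ≠ 0): (1/a)·(e^λ - 1)/(e^{λT} - 1) ≤ σ_min(J) ≤ min(1/(b e^{λ(T-1)}), 1). -/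
/-!
Write `J = 1 - N`, where `N` is the block subdiagonal matrix of the `A_t`. Since `N` is nilpotent,
`J⁻¹ = ∑_{k < T} N^k`, and `N^k` lives on the `k`-th block subdiagonal, where its blocks are the
products of `k` consecutive `A_t`. A matrix with at most one nonzero block in every block row and
block column has operator norm at most the largest norm of its blocks, so `‖N^k‖ ≤ a e^{λk}` and
summing the geometric series bounds `‖J⁻¹‖` from above. Conversely `‖J⁻¹‖` dominates the norm of
each of its blocks, in particular of the corner block `A_T ⋯ A_2` and of the diagonal block `1`.
-/

open scoped Matrix.Norms.L2Operator

/-- The descending product `A_{j+k} ⋯ A_{j+1}` of matrices. -/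
def prodDesc {D : ℕ} (A : ℕ → Matrix (Fin D) (Fin D) ℝ) (j : ℕ) :
    ℕ → Matrix (Fin D) (Fin D) ℝ
  | 0 => 1
  | k + 1 => A (j + k + 1) * prodDesc A j k

namespace EuclideanSpace

variable {𝕜 ι κ : Type*} [RCLike 𝕜]

def block (x : EuclideanSpace 𝕜 (ι × κ)) (t : ι) : EuclideanSpace 𝕜 κ :=
  WithLp.toLp 2 fun i => x (t, i)

theorem norm_sq_eq_sum_block [Fintype ι] [Fintype κ] (x : EuclideanSpace 𝕜 (ι × κ)) :
    ‖x‖ ^ 2 = ∑ t, ‖block x t‖ ^ 2 := by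
  simp only [EuclideanSpace.norm_sq_eq, Fintype.sum_prod_type, block]

end EuclideanSpace

namespace Matrix

open EuclideanSpace

theorem submatrix_prodMk_mul {ι κ R : Type*} [Fintype ι] [Fintype κ]
    [NonUnitalNonAssocSemiring R] (P Q : Matrix (ι × κ) (ι × κ) R) (t s : ι) :
    (P * Q).submatrix (Prod.mk t) (Prod.mk s) =
      ∑ u, P.submatrix (Prod.mk t) (Prod.mk u) * Q.submatrix (Prod.mk u) (Prod.mk s) := by
  ext i j
  simp [mul_apply, Fintype.sum_prod_type, Matrix.sum_apply]

variable {𝕜 ι κ : Type*} [RCLike 𝕜] [Fintype ι] [DecidableEq ι] [Fintype κ] [DecidableEq κ]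

theorem block_toEuclideanCLM (P : Matrix (ι × κ) (ι × κ) 𝕜) (x : EuclideanSpace 𝕜 (ι × κ))
    (t : ι) :
    block (toEuclideanCLM (𝕜 := 𝕜) P x) t =
      ∑ s, toEuclideanCLM (𝕜 := 𝕜) (P.submatrix (Prod.mk t) (Prod.mk s)) (block x s) := by
  ext i
  simp [block, mulVec, dotProduct, Fintype.sum_prod_type]

theorem norm_submatrix_prodMk_le (P : Matrix (ι × κ) (ι × κ) 𝕜) (t s : ι) :
    ‖P.submatrix (Prod.mk t) (Prod.mk s)‖ ≤ ‖P‖ := by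
  refine ContinuousLinearMap.opNorm_le_bound _ (norm_nonneg _) fun v => ?_
  set x : EuclideanSpace 𝕜 (ι × κ) := WithLp.toLp 2 fun p => if p.1 = s then v p.2 else 0
  have hx : ∀ s', block x s' = if s' = s then v else 0 := by
    intro s'
    split_ifs with h <;> ext i <;> simp [x, block, h]
  have hnorm : ‖x‖ = ‖v‖ := by
    rw [← sq_eq_sq₀ (norm_nonneg _) (norm_nonneg _), norm_sq_eq_sum_block,
      Fintype.sum_eq_single s (fun s' hs' => by simp [hx, hs']), hx, if_pos rfl]
  calc ‖toEuclideanCLM (𝕜 := 𝕜) (P.submatrix (Prod.mk t) (Prod.mk s)) v‖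
      = ‖block (toEuclideanCLM (𝕜 := 𝕜) P x) t‖ := by
        rw [block_toEuclideanCLM, Fintype.sum_eq_single s (fun s' hs' => by simp [hx, hs']),
          hx, if_pos rfl]
    _ ≤ ‖toEuclideanCLM (𝕜 := 𝕜) P x‖ := by
        rw [← sq_le_sq₀ (norm_nonneg _) (norm_nonneg _), norm_sq_eq_sum_block _]
        exact Finset.single_le_sum (f := fun t' => ‖block (toEuclideanCLM (𝕜 := 𝕜) P x) t'‖ ^ 2)
          (fun t' _ => by positivity) (Finset.mem_univ t)
    _ ≤ ‖P‖ * ‖v‖ := hnorm ▸ (toEuclideanCLM (𝕜 := 𝕜) P).le_opNorm x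

theorem norm_le_of_block_norm_le (P : Matrix (ι × κ) (ι × κ) 𝕜) {c : ℝ} (hc : 0 ≤ c)
    (hrow : ∀ t s s', P.submatrix (Prod.mk t) (Prod.mk s) ≠ 0 →
      P.submatrix (Prod.mk t) (Prod.mk s') ≠ 0 → s = s')
    (hcol : ∀ t t' s, P.submatrix (Prod.mk t) (Prod.mk s) ≠ 0 →
      P.submatrix (Prod.mk t') (Prod.mk s) ≠ 0 → t = t')
    (hblock : ∀ t s, ‖P.submatrix (Prod.mk t) (Prod.mk s)‖ ≤ c) :
    ‖P‖ ≤ c := by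
  refine ContinuousLinearMap.opNorm_le_bound _ hc fun x => ?_
  set y : ι → ι → EuclideanSpace 𝕜 κ := fun t s =>
    toEuclideanCLM (𝕜 := 𝕜) (P.submatrix (Prod.mk t) (Prod.mk s)) (block x s)
  have hy : ∀ t s, P.submatrix (Prod.mk t) (Prod.mk s) = 0 → y t s = 0 := by
    intro t s h
    simp [y, h]
  have hrow_sum : ∀ t, ‖∑ s, y t s‖ ^ 2 = ∑ s, ‖y t s‖ ^ 2 := by
    intro t
    by_cases h : ∃ s₀, P.submatrix (Prod.mk t) (Prod.mk s₀) ≠ 0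
    · obtain ⟨s₀, hs₀⟩ := h
      have hzero : ∀ s ≠ s₀, y t s = 0 := fun s hs =>
        hy t s (not_not.mp fun h => hs (hrow t s s₀ h hs₀))
      rw [Fintype.sum_eq_single s₀ hzero,
        Fintype.sum_eq_single s₀ fun s hs => by simp [hzero s hs]]
    · push Not at h
      simp [hy _ _ (h _)]
  have hcol_sum : ∀ s, ∑ t, ‖y t s‖ ^ 2 ≤ (c * ‖block x s‖) ^ 2 := by
    intro s
    have hle : ∀ t, ‖y t s‖ ≤ c * ‖block x s‖ := fun t =>
      (ContinuousLinearMap.le_opNorm _ _).trans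
        (mul_le_mul_of_nonneg_right (hblock t s) (norm_nonneg _))
    by_cases h : ∃ t₀, P.submatrix (Prod.mk t₀) (Prod.mk s) ≠ 0
    · obtain ⟨t₀, ht₀⟩ := h
      rw [Fintype.sum_eq_single t₀ fun t ht => by
        simp [hy t s (not_not.mp fun h => ht (hcol t t₀ s h ht₀))]]
      gcongr
      exact hle t₀
    · push Not at h
      simpa [hy _ _ (h _)] using sq_nonneg (c * ‖block x s‖)
  rw [← sq_le_sq₀ (norm_nonneg _) (by positivity), norm_sq_eq_sum_block]
  calc ∑ t, ‖block (toEuclideanCLM (𝕜 := 𝕜) P x) t‖ ^ 2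
      = ∑ s, ∑ t, ‖y t s‖ ^ 2 := by
        simp only [block_toEuclideanCLM, y, ← Finset.sum_comm, ← hrow_sum]
    _ ≤ ∑ s, (c * ‖block x s‖) ^ 2 := Finset.sum_le_sum fun s _ => hcol_sum s
    _ = (c * ‖x‖) ^ 2 := by simp only [mul_pow, ← Finset.mul_sum, norm_sq_eq_sum_block]

end Matrix

section BlockSubdiag

open Matrix

variable {D T : ℕ}

def blockSubdiag (A : ℕ → Matrix (Fin D) (Fin D) ℝ) :
    Matrix (Fin T × Fin D) (Fin T × Fin D) ℝ :=
  fun p q => if p.1.val = q.1.val + 1 then A (p.1.val + 1) p.2 q.2 else 0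

theorem submatrix_blockSubdiag (A : ℕ → Matrix (Fin D) (Fin D) ℝ) (t s : Fin T) :
    (blockSubdiag A).submatrix (Prod.mk t) (Prod.mk s) =
      if t.val = s.val + 1 then A (t.val + 1) else 0 := by
  ext i j
  by_cases h : t.val = s.val + 1 <;> simp [blockSubdiag, h]

theorem submatrix_blockSubdiag_pow (A : ℕ → Matrix (Fin D) (Fin D) ℝ) (k : ℕ) (t s : Fin T) :
    (blockSubdiag A ^ k).submatrix (Prod.mk t) (Prod.mk s) =
      if t.val = s.val + k then prodDesc A (s.val + 1) k else 0 := by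
  induction k generalizing t with
  | zero =>
    by_cases h : t = s
    · subst h; ext i j; simp [prodDesc, one_apply]
    · ext i j; simp [one_apply, h, Fin.val_eq_val]
  | succ k ih =>
    rw [pow_succ', submatrix_prodMk_mul]
    simp only [submatrix_blockSubdiag, ih, ite_mul, mul_ite, zero_mul, mul_zero]
    by_cases h : t.val = s.val + (k + 1)
    · have hlt : s.val + k < T := by omega
      rw [Fintype.sum_eq_single ⟨s.val + k, hlt⟩ fun u hu => by
        rw [if_neg fun h' => hu (Fin.ext h')], if_pos h]
      simp only [show t.val = s.val + k + 1 by omega, if_true, prodDesc]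
      congr 2
      omega
    · rw [if_neg h]
      refine Finset.sum_eq_zero fun u _ => ?_
      split_ifs <;> first | rfl | omega

theorem blockSubdiag_pow_eq_zero (A : ℕ → Matrix (Fin D) (Fin D) ℝ) :
    blockSubdiag (T := T) A ^ T = 0 := by
  ext ⟨t, i⟩ ⟨s, j⟩
  have h := congrFun (congrFun (submatrix_blockSubdiag_pow A T t s) i) j
  rwa [if_neg (by omega), submatrix_apply] at h

theorem inv_one_sub_blockSubdiag (A : ℕ → Matrix (Fin D) (Fin D) ℝ) :
    (1 - blockSubdiag (T := T) A)⁻¹ = ∑ k ∈ Finset.range T, blockSubdiag A ^ k :=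
  inv_eq_right_inv (by rw [mul_neg_geom_sum, blockSubdiag_pow_eq_zero, sub_zero])

theorem submatrix_inv_one_sub_blockSubdiag (A : ℕ → Matrix (Fin D) (Fin D) ℝ) {t s : Fin T}
    (hst : s ≤ t) :
    ((1 - blockSubdiag A)⁻¹).submatrix (Prod.mk t) (Prod.mk s) =
      prodDesc A (s.val + 1) (t.val - s.val) := by
  ext i j
  have hpow : ∀ k, (blockSubdiag A ^ k) (t, i) (s, j) =
      (if t.val = s.val + k then prodDesc A (s.val + 1) k else 0) i j := fun k =>
    congrFun (congrFun (submatrix_blockSubdiag_pow A k t s) i) j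
  rw [submatrix_apply, inv_one_sub_blockSubdiag, Matrix.sum_apply]
  simp_rw [hpow]
  rw [Finset.sum_eq_single (t.val - s.val)]
  · rw [if_pos (by omega)]
  · intro k _ hk
    rw [if_neg (by omega), Matrix.zero_apply]
  · intro h
    exact absurd (Finset.mem_range.mpr (by omega)) h

theorem norm_blockSubdiag_pow_le (A : ℕ → Matrix (Fin D) (Fin D) ℝ) (k : ℕ) {c : ℝ} (hc : 0 ≤ c)
    (hA : ∀ s : Fin T, ‖prodDesc A (s.val + 1) k‖ ≤ c) :
    ‖blockSubdiag (T := T) A ^ k‖ ≤ c := by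
  have hsupp : ∀ t s : Fin T, (blockSubdiag A ^ k).submatrix (Prod.mk t) (Prod.mk s) ≠ 0 →
      t.val = s.val + k := fun t s h => by
    by_contra h'
    exact h (by rw [submatrix_blockSubdiag_pow, if_neg h'])
  refine norm_le_of_block_norm_le _ hc
    (fun t s s' h h' => Fin.ext (by have := hsupp _ _ h; have := hsupp _ _ h'; omega))
    (fun t t' s h h' => Fin.ext (by have := hsupp _ _ h; have := hsupp _ _ h'; omega))
    fun t s => ?_
  rw [submatrix_blockSubdiag_pow]
  split_ifs
  · exact hA s
  · rwa [norm_zero]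

theorem eq_one_sub_blockSubdiag {A : ℕ → Matrix (Fin D) (Fin D) ℝ}
    {J : Matrix (Fin T × Fin D) (Fin T × Fin D) ℝ}
    (hJ : ∀ (t t' : Fin T) (i j : Fin D), J (t, i) (t', j) =
      if t = t' then (if i = j then 1 else 0)
      else if t.val = t'.val + 1 then -(A (t.val + 1) i j) else 0) :
    J = 1 - blockSubdiag A := by
  ext ⟨t, i⟩ ⟨s, j⟩
  rw [hJ, Matrix.sub_apply, one_apply, blockSubdiag]
  by_cases hts : t = s
  · subst hts
    by_cases hij : i = j <;> simp [hij]
  · by_cases h : t.val = s.val + 1 <;> simp [hts, h]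

theorem norm_prodDesc_le_norm_inv_one_sub_blockSubdiag (A : ℕ → Matrix (Fin D) (Fin D) ℝ)
    {t s : Fin T} (hst : s ≤ t) :
    ‖prodDesc A (s.val + 1) (t.val - s.val)‖ ≤ ‖(1 - blockSubdiag (T := T) A)⁻¹‖ := by
  rw [← submatrix_inv_one_sub_blockSubdiag A hst]
  exact norm_submatrix_prodMk_le _ _ _

theorem norm_inv_one_sub_blockSubdiag_le (A : ℕ → Matrix (Fin D) (Fin D) ℝ) {c : ℕ → ℝ}
    (hc : ∀ k, 0 ≤ c k) (hA : ∀ (s : Fin T) k, ‖prodDesc A (s.val + 1) k‖ ≤ c k) :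
    ‖(1 - blockSubdiag (T := T) A)⁻¹‖ ≤ ∑ k ∈ Finset.range T, c k := by
  rw [inv_one_sub_blockSubdiag]
  exact (norm_sum_le _ _).trans <| Finset.sum_le_sum fun k _ =>
    norm_blockSubdiag_pow_le A k (hc k) fun s => hA s k

end BlockSubdiag

/-- Block row `t : Fin T` is the paper's block row `t.val + 1`. -/
theorem lle_controls_sigma_min_general
    (D T : ℕ) (hT : 1 ≤ T) (a b lam : ℝ)
    (ha : 1 ≤ a) (hb0 : 0 < b) (hlam : lam ≠ 0)
    (A : ℕ → Matrix (Fin D) (Fin D) ℝ)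
    (hreg : ∀ t k : ℕ, 1 ≤ t →
      b * Real.exp (lam * k) ≤
          ‖Matrix.toEuclideanCLM (𝕜 := ℝ) (prodDesc A (t - 1) k)‖ ∧
        ‖Matrix.toEuclideanCLM (𝕜 := ℝ) (prodDesc A (t - 1) k)‖ ≤
          a * Real.exp (lam * k))
    (J : Matrix (Fin T × Fin D) (Fin T × Fin D) ℝ)
    (hJ : ∀ (t t' : Fin T) (i j : Fin D),
      J (t, i) (t', j) =
        if t = t' then (if i = j then 1 else 0)
        else if t.val = t'.val + 1 then -(A (t.val + 1) i j) else 0) :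
    (1 / a) * ((Real.exp lam - 1) / (Real.exp (lam * T) - 1)) ≤
        ‖Matrix.toEuclideanCLM (𝕜 := ℝ) J⁻¹‖⁻¹ ∧
      ‖Matrix.toEuclideanCLM (𝕜 := ℝ) J⁻¹‖⁻¹ ≤
        min (1 / (b * Real.exp (lam * ((T : ℝ) - 1)))) 1 := by
  have hJN := eq_one_sub_blockSubdiag hJ
  rw [← Matrix.cstar_norm_def]
  have hprod : ∀ j k : ℕ, b * Real.exp (lam * k) ≤ ‖prodDesc A (j + 1) k‖ ∧
      ‖prodDesc A (j + 1) k‖ ≤ a * Real.exp (lam * k) := fun j k => by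
    simp only [Matrix.cstar_norm_def]
    exact hreg (j + 2) k (by omega)
  have : Nontrivial (Matrix (Fin D) (Fin D) ℝ) := nontrivial_of_ne 1 0 fun h => by
    have := (hreg 1 0 le_rfl).1
    simp [prodDesc, h] at this
    linarith
  have hone : 1 ≤ ‖J⁻¹‖ := by
    simpa [prodDesc, hJN] using norm_prodDesc_le_norm_inv_one_sub_blockSubdiag A (le_refl ⟨0, hT⟩)
  have hlast : b * Real.exp (lam * ((T : ℝ) - 1)) ≤ ‖J⁻¹‖ := by
    have h := norm_prodDesc_le_norm_inv_one_sub_blockSubdiag A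
      (t := ⟨T - 1, by omega⟩) (s := ⟨0, hT⟩) (Nat.zero_le _)
    rw [← Nat.cast_one, ← Nat.cast_sub hT, hJN]
    exact (hprod 0 (T - 1)).1.trans h
  have hup : ‖J⁻¹‖ ≤ a * ((Real.exp (lam * T) - 1) / (Real.exp lam - 1)) := by
    have hexp : ∀ k : ℕ, Real.exp (lam * k) = Real.exp lam ^ k := fun k => by
      rw [← Real.exp_nat_mul, mul_comm]
    rw [hJN, hexp, ← geom_sum_eq (by simpa using hlam), Finset.mul_sum]
    exact norm_inv_one_sub_blockSubdiag_le A (fun k => by positivity) fun s k => by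
      simpa [hexp] using (hprod s k).2
  refine ⟨?_, le_min ?_ (inv_le_one_of_one_le₀ hone)⟩
  · calc 1 / a * ((Real.exp lam - 1) / (Real.exp (lam * T) - 1))
        = (a * ((Real.exp (lam * T) - 1) / (Real.exp lam - 1)))⁻¹ := by
          rw [mul_inv, inv_div, one_div]
      _ ≤ ‖J⁻¹‖⁻¹ := inv_anti₀ (one_pos.trans_le hone) hup
  · rw [one_div]
    exact inv_anti₀ (by positivity) hlast

/-- **Lyapunov exponent controls the smallest singular value of the DEER Jacobian.**
Under the LLE regularity condition
`b e^{λk} ≤ ‖A_{t+k-1} ⋯ A_t‖₂ ≤ a e^{λk}` (with `a ≥ 1`, `0 < b ≤ 1`, `λ ≠ 0`), the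
smallest singular value `σ_min(J) = 1/‖J⁻¹‖₂` of the block bidiagonal Jacobian `J`
satisfies `(1/a)(e^λ - 1)/(e^{λT} - 1) ≤ σ_min(J) ≤ min(1/(b e^{λ(T-1)}), 1)`.
Block row `t : Fin T` is 1-based as `t.val + 1`; the product of length `k` starting at
index `t ≥ 1` is `prodDesc A (t-1) k = A_{t+k-1} ⋯ A_t`. -/
theorem lle_controls_sigma_min
    (D T : ℕ) (hT : 1 ≤ T) (a b lam : ℝ)
    (ha : 1 ≤ a) (hb : b ≤ 1) (hb0 : 0 < b) (hlam : lam ≠ 0)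
    (A : ℕ → Matrix (Fin D) (Fin D) ℝ)
    (hreg : ∀ t k : ℕ, 1 ≤ t →
      b * Real.exp (lam * k) ≤
          ‖Matrix.toEuclideanCLM (𝕜 := ℝ) (prodDesc A (t - 1) k)‖ ∧
        ‖Matrix.toEuclideanCLM (𝕜 := ℝ) (prodDesc A (t - 1) k)‖ ≤
          a * Real.exp (lam * k))
    (J : Matrix (Fin T × Fin D) (Fin T × Fin D) ℝ)
    (hJ : ∀ (t t' : Fin T) (i j : Fin D),
      J (t, i) (t', j) =
        if t = t' then (if i = j then 1 else 0)
        else if t.val = t'.val + 1 then -(A (t.val + 1) i j) else 0) :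
    (1 / a) * ((Real.exp lam - 1) / (Real.exp (lam * T) - 1)) ≤
        ‖Matrix.toEuclideanCLM (𝕜 := ℝ) J⁻¹‖⁻¹ ∧
      ‖Matrix.toEuclideanCLM (𝕜 := ℝ) J⁻¹‖⁻¹ ≤
        min (1 / (b * Real.exp (lam * ((T : ℝ) - 1)))) 1 :=
  lle_controls_sigma_min_general D T hT a b lam ha hb0 hlam A hreg J hJ
end

section
/- Let J ∈ R^{n×n} be invertible and L-Lipschitz as a matrix-valued function of s ∈ R^n (in spectral norm), with fixed point s* of r (r(s*) = 0) and σ_min(J(s)) ≥ √μ > 0 for all s. Then Gauss-Newton iterates s^{(i+1)} = s^{(i)} - J(s^{(i)})^{-1} r(s^{(i)}) satisfy the residual recursion ‖r(s^{(i+1)})‖₂ ≤ (L/(2μ)) ‖r(s^{(i)})‖₂². Consequently, if ‖r(s^{(i)})‖₂ < 2μ/L, then ‖r(s^{(i+1)})‖₂ < ‖r(s^{(i)})‖₂, and the iterates remain in the region {s : ‖r(s)‖₂ < 2μ/L} thereafter, converging quadratically. -/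
/-! The remainder of the first-order Taylor expansion of `r` is bounded by `L/2 ‖Δ‖²` when the
derivative is `L`-Lipschitz. The Gauss–Newton step `Δ = -J⁻¹ r` kills the linear part, so the new
residual is this remainder alone, and `√μ ‖Δ‖ ≤ ‖J Δ‖ = ‖r‖` turns `L/2 ‖Δ‖²` into
`L/(2μ) ‖r‖²`. The map `a ↦ L/(2μ) a²` sends `[0, 2μ/L)` into itself and strictly decreases its
positive points. -/

open Set

section Taylor

variable {E F : Type*} [NormedAddCommGroup E] [NormedSpace ℝ E]
  [NormedAddCommGroup F] [NormedSpace ℝ F]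

/-- Compare `τ ↦ r (x + τ • Δ) - r x - τ • J x Δ` with `τ ↦ L/2 τ² ‖Δ‖²` on `[0, 1]`. -/
theorem norm_sub_sub_fderiv_le_of_lipschitz {r : E → F} {J : E → E →L[ℝ] F} {L : ℝ}
    (hderiv : ∀ y, HasFDerivAt r (J y) y) {x : E} (hLip : ∀ y, ‖J y - J x‖ ≤ L * ‖y - x‖)
    (Δ : E) : ‖r (x + Δ) - r x - J x Δ‖ ≤ L / 2 * ‖Δ‖ ^ 2 := by
  set f : ℝ → F := fun τ => r (x + τ • Δ) - r x - τ • J x Δ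
  set f' : ℝ → F := fun τ => J (x + τ • Δ) Δ - J x Δ
  have hf : ∀ τ, HasDerivAt f (f' τ) τ := by
    intro τ
    have hline : HasDerivAt (fun τ : ℝ => x + τ • Δ) Δ τ := by
      simpa using ((hasDerivAt_id τ).smul_const Δ).const_add x
    have hlin : HasDerivAt (fun τ : ℝ => τ • J x Δ) (J x Δ) τ := by
      simpa using (hasDerivAt_id τ).smul_const (J x Δ)
    exact (((hderiv _).comp_hasDerivAt τ hline).sub_const (r x)).sub hlin
  have hB : ∀ τ, HasDerivAt (fun τ : ℝ => L / 2 * τ ^ 2 * ‖Δ‖ ^ 2) (L * τ * ‖Δ‖ ^ 2) τ :=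
    fun τ => (((hasDerivAt_pow 2 τ).const_mul (L / 2)).mul_const (‖Δ‖ ^ 2)).congr_deriv (by ring)
  have hbound : ∀ τ ∈ Ico (0 : ℝ) 1, ‖f' τ‖ ≤ L * τ * ‖Δ‖ ^ 2 := by
    rintro τ ⟨hτ, -⟩
    calc ‖f' τ‖ = ‖(J (x + τ • Δ) - J x) Δ‖ := rfl
      _ ≤ ‖J (x + τ • Δ) - J x‖ * ‖Δ‖ := ContinuousLinearMap.le_opNorm _ _
      _ ≤ L * ‖τ • Δ‖ * ‖Δ‖ := by
        gcongr
        simpa using hLip (x + τ • Δ)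
      _ = L * τ * ‖Δ‖ ^ 2 := by
        rw [norm_smul, Real.norm_of_nonneg hτ]
        ring
  have hcompare := image_norm_le_of_norm_deriv_right_le_deriv_boundary
    (fun τ _ => (hf τ).continuousAt.continuousWithinAt)
    (fun τ _ => (hf τ).hasDerivWithinAt) (by simp [f]) hB hbound
    (right_mem_Icc.2 zero_le_one)
  simpa [f] using hcompare

end Taylor

section NewtonStep

variable {E F : Type*} [NormedAddCommGroup E] [NormedSpace ℝ E]
  [NormedAddCommGroup F] [NormedSpace ℝ F]

theorem norm_residual_newton_step_le {r : E → F} {J : E → E →L[ℝ] F} {L c : ℝ}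
    (hL : 0 ≤ L) (hc : 0 < c) (hderiv : ∀ y, HasFDerivAt r (J y) y) {x : E}
    (hLip : ∀ y, ‖J y - J x‖ ≤ L * ‖y - x‖) (hbelow : ∀ v, c * ‖v‖ ≤ ‖J x v‖)
    {Δ : E} (hΔ : J x Δ = -r x) :
    ‖r (x + Δ)‖ ≤ L / (2 * c ^ 2) * ‖r x‖ ^ 2 := by
  have hΔle : c * ‖Δ‖ ≤ ‖r x‖ := by simpa [hΔ] using hbelow Δ
  have hremainder : r (x + Δ) = r (x + Δ) - r x - J x Δ := by
    rw [hΔ]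
    abel
  calc ‖r (x + Δ)‖ ≤ L / 2 * ‖Δ‖ ^ 2 := by
        rw [hremainder]
        exact norm_sub_sub_fderiv_le_of_lipschitz hderiv hLip Δ
    _ = L / (2 * c ^ 2) * (c * ‖Δ‖) ^ 2 := by
        field_simp
    _ ≤ L / (2 * c ^ 2) * ‖r x‖ ^ 2 := by
        gcongr

end NewtonStep

section QuadraticRecursion

variable {K : ℝ}

theorem lt_of_le_mul_sq {a b : ℝ} (hK : 0 < K) (h : b ≤ K * a ^ 2) (ha : 0 < a)
    (haK : a < K⁻¹) : b < a := by
  have hKa : K * a < 1 := by simpa [hK.ne'] using mul_lt_mul_of_pos_left haK hK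
  nlinarith

theorem lt_inv_of_le_mul_sq {a b : ℝ} (hK : 0 < K) (h : b ≤ K * a ^ 2) (ha : 0 ≤ a)
    (haK : a < K⁻¹) : b < K⁻¹ := by
  have hKa : K * a < 1 := by simpa [hK.ne'] using mul_lt_mul_of_pos_left haK hK
  have : K * a ^ 2 < K⁻¹ := by
    rw [← mul_lt_mul_iff_of_pos_left hK, mul_inv_cancel₀ hK.ne']
    nlinarith [mul_nonneg hK.le ha]
  linarith

theorem forall_lt_inv_of_le_mul_sq {a : ℕ → ℝ} (hK : 0 < K) (hnonneg : ∀ i, 0 ≤ a i)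
    (h : ∀ i, a (i + 1) ≤ K * a i ^ 2) (h₀ : a 0 < K⁻¹) : ∀ i, a i < K⁻¹
  | 0 => h₀
  | i + 1 => lt_inv_of_le_mul_sq hK (h i) (hnonneg i) (forall_lt_inv_of_le_mul_sq hK hnonneg h h₀ i)

end QuadraticRecursion

theorem gauss_newton_residual_recursion_general
    (n : ℕ) (L μ : ℝ) (hL : 0 < L) (hμ : 0 < μ)
    (r : EuclideanSpace ℝ (Fin n) → EuclideanSpace ℝ (Fin n))
    (J Jinv : EuclideanSpace ℝ (Fin n) →
      (EuclideanSpace ℝ (Fin n) →L[ℝ] EuclideanSpace ℝ (Fin n)))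
    (hderiv : ∀ s, HasFDerivAt r (J s) s)
    (hLip : ∀ s s', ‖J s - J s'‖ ≤ L * ‖s - s'‖)
    (hinv₁ : ∀ s, (J s).comp (Jinv s) = ContinuousLinearMap.id ℝ _)
    (hσ : ∀ s x, Real.sqrt μ * ‖x‖ ≤ ‖J s x‖)
    (s : ℕ → EuclideanSpace ℝ (Fin n))
    (hGN : ∀ i, s (i + 1) = s i - Jinv (s i) (r (s i))) :
    (∀ i, ‖r (s (i + 1))‖ ≤ (L / (2 * μ)) * ‖r (s i)‖ ^ 2) ∧
    (∀ i, 0 < ‖r (s i)‖ → ‖r (s i)‖ < 2 * μ / L →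
      ‖r (s (i + 1))‖ < ‖r (s i)‖) ∧
    (‖r (s 0)‖ < 2 * μ / L → ∀ i, ‖r (s i)‖ < 2 * μ / L) := by
  have hK : 0 < L / (2 * μ) := by positivity
  have hrec : ∀ i, ‖r (s (i + 1))‖ ≤ (L / (2 * μ)) * ‖r (s i)‖ ^ 2 := by
    intro i
    have hstep : J (s i) (-Jinv (s i) (r (s i))) = -r (s i) := by
      simpa using congrArg (fun T => -T (r (s i))) (hinv₁ (s i))
    have h := norm_residual_newton_step_le hL.le (Real.sqrt_pos.2 hμ) hderiv
      (fun y => hLip y (s i)) (hσ (s i)) hstep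
    rwa [Real.sq_sqrt hμ.le, ← sub_eq_add_neg, ← hGN] at h
  refine ⟨hrec, ?_, ?_⟩ <;> rw [← inv_div]
  · exact fun i hpos hsmall => lt_of_le_mul_sq hK (hrec i) hpos hsmall
  · exact forall_lt_inv_of_le_mul_sq hK (fun i => norm_nonneg (r (s i))) hrec

/-- **Gauss-Newton residual recursion and basin of quadratic convergence.**
If `J` is `L`-Lipschitz, invertible, and `σ_min(J(s)) ≥ √μ > 0`, then the Gauss-Newton
iterates satisfy `‖r(s^{(i+1)})‖ ≤ (L/(2μ)) ‖r(s^{(i)})‖²`; hence if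
`‖r(s^{(i)})‖ < 2μ/L` the residual strictly decreases, and iterates starting in
`{s : ‖r(s)‖ < 2μ/L}` remain there, converging quadratically. -/
theorem gauss_newton_residual_recursion
    (n : ℕ) (L μ : ℝ) (hL : 0 < L) (hμ : 0 < μ)
    (r : EuclideanSpace ℝ (Fin n) → EuclideanSpace ℝ (Fin n))
    (J Jinv : EuclideanSpace ℝ (Fin n) →
      (EuclideanSpace ℝ (Fin n) →L[ℝ] EuclideanSpace ℝ (Fin n)))
    (hderiv : ∀ s, HasFDerivAt r (J s) s)
    (hLip : ∀ s s', ‖J s - J s'‖ ≤ L * ‖s - s'‖)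
    (hinv₁ : ∀ s, (J s).comp (Jinv s) = ContinuousLinearMap.id ℝ _)
    (hinv₂ : ∀ s, (Jinv s).comp (J s) = ContinuousLinearMap.id ℝ _)
    (hσ : ∀ s x, Real.sqrt μ * ‖x‖ ≤ ‖J s x‖)
    (sstar : EuclideanSpace ℝ (Fin n)) (hroot : r sstar = 0)
    (s : ℕ → EuclideanSpace ℝ (Fin n))
    (hGN : ∀ i, s (i + 1) = s i - Jinv (s i) (r (s i))) :
    (∀ i, ‖r (s (i + 1))‖ ≤ (L / (2 * μ)) * ‖r (s i)‖ ^ 2) ∧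
    (∀ i, 0 < ‖r (s i)‖ → ‖r (s i)‖ < 2 * μ / L →
      ‖r (s (i + 1))‖ < ‖r (s i)‖) ∧
    (‖r (s 0)‖ < 2 * μ / L → ∀ i, ‖r (s i)‖ < 2 * μ / L) :=
  gauss_newton_residual_recursion_general n L μ hL hμ r J Jinv hderiv hLip hinv₁ hσ s hGN
end
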